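/- Let k ≥ 1 be a natural number, κ ≥ 1, λ₂ > 0, and let σ, β : Fin k → ℝ be positive with σ nonincreasing, σ(0) = 1, σ(k−1) = 1/κ, β nondecreasing, j ↦ σ_j² β_j nonincreasing, and ∑_{j<k} β_j² = 1. Then for every j, β(0) + λ₂/β(0) ≤ β_j + λ₂/(σ_j² β_j) ≤ 1 + λ₂ √k κ². -/
import Mathlib


/-- Two-sided bound of Appendix D of the paper on the quantities
`c^{(i)} β_j^{(i)} = β_j + λ₂/(σ_j² β_j)` of the AOP iteration:
`β(0) + λ₂/β(0) ≤ β_j + λ₂/(σ_j² β_j) ≤ 1 + λ₂ √k κ²` for every `j`. -/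
theorem aop_rescaling_constant_bounds
    (k : ℕ) (hk : 1 ≤ k) (κ lam2 : ℝ)
    (hκ : 1 ≤ κ) (hlam2 : 0 < lam2)
    (σ β : Fin k → ℝ)
    (hσpos : ∀ j, 0 < σ j) (hβpos : ∀ j, 0 < β j)
    (hσanti : Antitone σ)
    (hσ0 : σ ⟨0, by omega⟩ = 1) (hσlast : σ ⟨k - 1, by omega⟩ = 1 / κ)
    (hβmono : Monotone β)
    (hanti : Antitone (fun j => σ j ^ 2 * β j))
    (hsum : ∑ j, β j ^ 2 = 1) :
    ∀ j : Fin k,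
      β ⟨0, by omega⟩ + lam2 / β ⟨0, by omega⟩ ≤ β j + lam2 / (σ j ^ 2 * β j) ∧
      β j + lam2 / (σ j ^ 2 * β j) ≤ 1 + lam2 * Real.sqrt k * κ ^ 2 := by
  intro j
  set i0 : Fin k := ⟨0, by omega⟩ with hi0
  set il : Fin k := ⟨k - 1, by omega⟩ with hil
  have h0j : i0 ≤ j := by simp [Fin.le_def, hi0]
  have hjl : j ≤ il := by
    have := j.isLt
    simp only [Fin.le_def, hil]
    omega
  have hxpos : 0 < σ j ^ 2 * β j := mul_pos (pow_pos (hσpos j) 2) (hβpos j)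
  have hb0 : 0 < β i0 := hβpos i0
  have hbl : 0 < β il := hβpos il
  constructor
  · have h1 : σ j ^ 2 * β j ≤ β i0 := by
      have := hanti h0j
      simpa [hσ0] using this
    have h2 : lam2 / β i0 ≤ lam2 / (σ j ^ 2 * β j) :=
      div_le_div_of_nonneg_left hlam2.le hxpos h1
    have h3 : β i0 ≤ β j := hβmono h0j
    linarith
  · -- β j ≤ 1
    have hβj1 : β j ≤ 1 := by
      have h1 : β j ^ 2 ≤ 1 := by
        rw [← hsum]
        exact Finset.single_le_sum (fun i _ => sq_nonneg (β i)) (Finset.mem_univ j)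
      nlinarith [hβpos j]
    -- 1 ≤ k * β il ^ 2
    have hkb : (1 : ℝ) ≤ k * β il ^ 2 := by
      have h1 : (1 : ℝ) = ∑ i, β i ^ 2 := hsum.symm
      have h2 : ∑ i, β i ^ 2 ≤ ∑ _i : Fin k, β il ^ 2 :=
        Finset.sum_le_sum fun i _ => by
          have := hβmono (show i ≤ il by
            have := i.isLt; simp only [Fin.le_def, hil]; omega)
          nlinarith [hβpos i]
      calc (1:ℝ) = ∑ i, β i ^ 2 := hsum.symm
        _ ≤ ∑ _i : Fin k, β il ^ 2 := h2
        _ = k * β il ^ 2 := by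
              simp [Finset.sum_const, Finset.card_univ, nsmul_eq_mul]
    have hsq : Real.sqrt k ^ 2 = (k : ℝ) := Real.sq_sqrt (by positivity)
    have hsqpos : 0 < Real.sqrt k := Real.sqrt_pos.mpr (by exact_mod_cast hk)
    -- √k * β il ≥ 1
    have hsb : (1 : ℝ) ≤ Real.sqrt k * β il := by
      nlinarith [hkb, hsq, hsqpos, hbl, sq_nonneg (Real.sqrt k * β il - 1),
        mul_pos hsqpos hbl]
    -- σ j ^2 β j ≥ β il / κ²
    have hκpos : (0:ℝ) < κ := lt_of_lt_of_le one_pos hκ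
    have hlow : β il / κ ^ 2 ≤ σ j ^ 2 * β j := by
      have := hanti hjl
      simp only [hσlast] at this
      calc β il / κ ^ 2 = (1/κ)^2 * β il := by field_simp
        _ ≤ σ j ^ 2 * β j := this
    have h2 : lam2 / (σ j ^ 2 * β j) ≤ lam2 * Real.sqrt k * κ ^ 2 := by
      rw [div_le_iff₀ hxpos]
      have h3 : β il / κ ^ 2 * (Real.sqrt k * κ ^ 2) = Real.sqrt k * β il := by
        field_simp
      nlinarith [mul_le_mul_of_nonneg_left hlow (le_of_lt (by positivity : (0:ℝ) < Real.sqrt k * κ ^ 2))]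
    linarith
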